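/- For any ε ∈ ℝ^n, any points x_1,…,x_n ∈ ℝ^d, and any w, w̃ ∈ ℝ^d, one has | √(εᵀ K^{(w)} ε) − √(εᵀ K^{(w̃)} ε) | ≤ Σ_{i=1}^n |ε_i| √( |(w − w̃)ᵀ x_i| ). In particular, if ‖·‖ is a norm on ℝ^d with dual norm ‖·‖*, this is at most √(‖w − w̃‖) · Σ_{i=1}^n |ε_i| √(‖x_i‖*). -/

import Mathlib

/-!
The Brownian kernel is a Gram kernel: with `Φ a = 1_{(0,a]} - 1_{(a,0]}` in `L²(ℝ)` one has
`⟪Φ a, Φ b⟫ = brownianK a b`, hence `‖Φ a - Φ b‖ = √|a - b|` and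
`√(εᵀ K^{(w)} ε) = ‖∑ i, ε i • Φ (wᵀ x_i)‖`, so the first bound is the triangle inequality in
`L²(ℝ)`. The second follows from `|uᵀx| ≤ N u * ‖x‖_*`. As `dualNorm` is an `sSup`, this needs
`{wᵀx | N w ≤ 1}` to be bounded, which holds because in finite dimension every linear functional
is continuous for the norm `N`.
-/

open MeasureTheory ProbabilityTheory Real

noncomputable section

/-- `h` is a square-integrable weak-derivative representation of `g` (so `g 0 = 0`). -/
def IsHRep (g h : ℝ → ℝ) : Prop :=
  Measurable h ∧ MeasureTheory.Integrable (fun t => h t ^ 2) ∧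
    ∀ x : ℝ, g x = ∫ t in (0 : ℝ)..x, h t

/-- Membership in the Sobolev space `H`. -/
def MemH (g : ℝ → ℝ) : Prop := ∃ h, IsHRep g h

/-- The Sobolev norm `‖g‖_H = (∫ (g')²)^{1/2}`. -/
def HNorm (g : ℝ → ℝ) : ℝ :=
  sInf {r : ℝ | ∃ h, IsHRep g h ∧ r = Real.sqrt (∫ t : ℝ, h t ^ 2)}

/-- The unit ball of `H`. -/
def HUnitBall : Set (ℝ → ℝ) := {g | MemH g ∧ HNorm g ≤ 1}

/-- The dot product on `ℝ^d`. -/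
def dotp {d : ℕ} (w x : Fin d → ℝ) : ℝ := ∑ a, w a * x a

/-- `N` is a norm on `ℝ^d`. -/
def IsNorm {d : ℕ} (N : (Fin d → ℝ) → ℝ) : Prop :=
  (∀ x, 0 ≤ N x) ∧ (∀ x, N x = 0 ↔ x = 0) ∧ (∀ (t : ℝ) (x), N (t • x) = |t| * N x) ∧
    ∀ x y, N (x + y) ≤ N x + N y

/-- The dual norm `‖x‖_* = sup_{N w ≤ 1} wᵀx`. -/
def dualNorm {d : ℕ} (N : (Fin d → ℝ) → ℝ) (x : Fin d → ℝ) : ℝ :=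
  sSup {s : ℝ | ∃ w, N w ≤ 1 ∧ s = dotp w x}

/-- Standard Gaussian measure on `ℝ^n`. -/
def stdGaussianPi (n : ℕ) : Measure (Fin n → ℝ) :=
  MeasureTheory.Measure.pi fun _ => gaussianReal 0 1

/-- The Gaussian complexity `G_n` of the class
`{x ↦ g(wᵀx) : N w = 1, ‖g‖_H ≤ 1}` under covariate law `μX`. -/
def gaussComplexity (d n : ℕ) (N : (Fin d → ℝ) → ℝ) (μX : Measure (Fin d → ℝ)) : ℝ :=
  ∫ x : Fin n → Fin d → ℝ,
    (∫ ε : Fin n → ℝ,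
      sSup {s : ℝ | ∃ w, N w = 1 ∧ ∃ g ∈ HUnitBall,
        s = (n : ℝ)⁻¹ * ∑ i, ε i * g (dotp w (x i))} ∂(stdGaussianPi n))
    ∂(MeasureTheory.Measure.pi fun _ : Fin n => μX)

/-- `(c, μ, g)` is a valid representation of `f ∈ F_∞`:
`f x = c + ∫ g_w(wᵀx) dμ(w)` with `μ` a probability measure on the `N`-unit sphere,
each `g_w ∈ H`, and all relevant integrals existing. -/
def IsFRep {d : ℕ} (N : (Fin d → ℝ) → ℝ) (f : (Fin d → ℝ) → ℝ) (c : ℝ)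
    (μ : Measure (Fin d → ℝ)) (g : (Fin d → ℝ) → ℝ → ℝ) : Prop :=
  IsProbabilityMeasure μ ∧ (∀ᵐ w ∂μ, N w = 1) ∧ (∀ w, MemH (g w)) ∧
    (∀ x, MeasureTheory.Integrable (fun w => g w (dotp w x)) μ) ∧
    MeasureTheory.Integrable (fun w => HNorm (g w)) μ ∧
    ∀ x, f x = c + ∫ w, g w (dotp w x) ∂μ

/-- Membership in `F_∞`. -/
def MemFInfty {d : ℕ} (N : (Fin d → ℝ) → ℝ) (f : (Fin d → ℝ) → ℝ) : Prop :=
  ∃ c μ g, IsFRep N f c μ g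

/-- `Ω₀(f)`: infimum of `∫ ‖g_w‖_H dμ(w)` over representations of `f`. -/
def Omega0 {d : ℕ} (N : (Fin d → ℝ) → ℝ) (f : (Fin d → ℝ) → ℝ) : ℝ :=
  sInf {r : ℝ | ∃ c μ g, IsFRep N f c μ g ∧ r = ∫ w, HNorm (g w) ∂μ}

/-- `Ω(f) = max(|f(0)|, Ω₀(f))`. -/
def OmegaP {d : ℕ} (N : (Fin d → ℝ) → ℝ) (f : (Fin d → ℝ) → ℝ) : ℝ :=
  max |f 0| (Omega0 N f)

/-- Expected risk. -/
def trueRisk {d : ℕ} (ℓ : ℝ → ℝ → ℝ) (μXY : Measure ((Fin d → ℝ) × ℝ))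
    (f : (Fin d → ℝ) → ℝ) : ℝ := ∫ p, ℓ p.2 (f p.1) ∂μXY

/-- Empirical risk on a sample `ω`. -/
def empRisk {d n : ℕ} (ℓ : ℝ → ℝ → ℝ) (ω : Fin n → (Fin d → ℝ) × ℝ)
    (f : (Fin d → ℝ) → ℝ) : ℝ := (n : ℝ)⁻¹ * ∑ i, ℓ (ω i).2 (f (ω i).1)

/-- `Z` is subgaussian with variance proxy `v` under `μ`. -/
def IsSubG {Ω : Type*} [MeasurableSpace Ω] (μ : Measure Ω) (Z : Ω → ℝ) (v : ℝ) : Prop :=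
  ∀ t : ℝ, 0 < t →
    max (μ {ω | t ≤ Z ω}).toReal (μ {ω | Z ω ≤ -t}).toReal ≤ Real.exp (-t ^ 2 / (2 * v))

/-- The Brownian kernel. -/
def brownianK (a b : ℝ) : ℝ := (|a| + |b| - |a - b|) / 2

/-- Brownian kernel matrix of projected data. -/
def KMat {d n : ℕ} (x : Fin n → Fin d → ℝ) (w : Fin d → ℝ) : Matrix (Fin n) (Fin n) ℝ :=
  Matrix.of fun i i' => brownianK (dotp w (x i)) (dotp w (x i'))

open scoped InnerProductSpace

lemma dotp_eq_dotProduct {d : ℕ} (w x : Fin d → ℝ) : dotp w x = w ⬝ᵥ x := rfl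

lemma dotp_sub {d : ℕ} (u v x : Fin d → ℝ) : dotp (u - v) x = dotp u x - dotp v x :=
  sub_dotProduct u v x

lemma brownianK_eq (a b : ℝ) : brownianK a b = max (min a b) 0 + max (-max a b) 0 := by
  unfold brownianK
  rcases le_total a 0 with ha | ha <;> rcases le_total b 0 with hb | hb <;>
    rcases le_total a b with hab | hab <;>
    simp only [abs_of_nonneg, abs_of_nonpos, max_eq_left, max_eq_right, min_eq_left,
      min_eq_right, sub_nonneg, sub_nonpos, neg_nonneg, neg_nonpos, *] <;> linarith

def indicatorIocL2 (u v : ℝ) : Lp ℝ 2 (volume : Measure ℝ) :=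
  indicatorConstLp (s := Set.Ioc u v) 2 measurableSet_Ioc measure_Ioc_lt_top.ne 1

lemma inner_indicatorIocL2 (u v u' v' : ℝ) :
    ⟪indicatorIocL2 u v, indicatorIocL2 u' v'⟫_ℝ = max (min v v' - max u u') 0 := by
  rw [indicatorIocL2, indicatorIocL2, L2.real_inner_indicatorConstLp_one_indicatorConstLp_one
    measurableSet_Ioc measurableSet_Ioc measure_Ioc_lt_top.ne measure_Ioc_lt_top.ne,
    Set.Ioc_inter_Ioc, volume_real_Ioc]

def brownianFeature (a : ℝ) : Lp ℝ 2 (volume : Measure ℝ) :=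
  indicatorIocL2 0 a - indicatorIocL2 a 0

lemma inner_brownianFeature (a b : ℝ) :
    ⟪brownianFeature a, brownianFeature b⟫_ℝ = brownianK a b := by
  have cross₁ : max (min 0 b - max a 0) 0 = 0 :=
    max_eq_right (by linarith [min_le_left 0 b, le_max_right a 0])
  have cross₂ : max (min a 0 - max 0 b) 0 = 0 :=
    max_eq_right (by linarith [min_le_right a 0, le_max_left 0 b])
  simp only [brownianFeature, inner_sub_left, inner_sub_right, inner_indicatorIocL2, cross₁,
    cross₂, max_self, min_self, sub_zero, zero_sub, sub_neg_eq_add, brownianK_eq]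

lemma norm_brownianFeature_sub (a b : ℝ) :
    ‖brownianFeature a - brownianFeature b‖ = √|a - b| := by
  rw [← Real.sqrt_sq (norm_nonneg _), ← real_inner_self_eq_norm_sq, inner_sub_sub_self]
  simp only [inner_brownianFeature, brownianK, sub_self, abs_zero, abs_sub_comm b a]
  ring_nf

lemma sum_sum_mul_brownianK_eq_norm_sq {ι : Type*} [Fintype ι] (c a : ι → ℝ) :
    ∑ i, ∑ j, c i * c j * brownianK (a i) (a j) = ‖∑ i, c i • brownianFeature (a i)‖ ^ 2 := by
  rw [← real_inner_self_eq_norm_sq, sum_inner]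
  simp only [inner_sum, real_inner_smul_left, real_inner_smul_right, inner_brownianFeature,
    mul_assoc, mul_left_comm]

lemma abs_sqrt_sum_sum_brownianK_sub_le {ι : Type*} [Fintype ι] (c a b : ι → ℝ) :
    |√(∑ i, ∑ j, c i * c j * brownianK (a i) (a j)) -
        √(∑ i, ∑ j, c i * c j * brownianK (b i) (b j))| ≤ ∑ i, |c i| * √|a i - b i| := by
  simp only [sum_sum_mul_brownianK_eq_norm_sq, Real.sqrt_sq (norm_nonneg _)]
  calc |‖∑ i, c i • brownianFeature (a i)‖ - ‖∑ i, c i • brownianFeature (b i)‖|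
      ≤ ‖∑ i, c i • (brownianFeature (a i) - brownianFeature (b i))‖ := by
        simpa only [smul_sub, Finset.sum_sub_distrib] using abs_norm_sub_norm_le _ _
    _ ≤ ∑ i, ‖c i • (brownianFeature (a i) - brownianFeature (b i))‖ := norm_sum_le _ _
    _ = ∑ i, |c i| * √|a i - b i| := by
        simp only [norm_smul, Real.norm_eq_abs, norm_brownianFeature_sub]

/-- A type synonym, so that the topology induced by `N` does not clash with the product
topology of `Fin d → ℝ`. -/
def NormedBy {d : ℕ} (_ : (Fin d → ℝ) → ℝ) : Type := Fin d → ℝ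

namespace NormedBy

variable {d : ℕ} (N : (Fin d → ℝ) → ℝ)

instance : AddCommGroup (NormedBy N) := inferInstanceAs (AddCommGroup (Fin d → ℝ))
instance : Module ℝ (NormedBy N) := inferInstanceAs (Module ℝ (Fin d → ℝ))
instance : FiniteDimensional ℝ (NormedBy N) := inferInstanceAs (FiniteDimensional ℝ (Fin d → ℝ))
instance : Norm (NormedBy N) := ⟨N⟩

end NormedBy

namespace IsNorm

variable {d : ℕ} {N : (Fin d → ℝ) → ℝ}

lemma normedSpaceCore (hN : IsNorm N) : NormedSpace.Core ℝ (NormedBy N) where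
  norm_nonneg := hN.1
  norm_smul := hN.2.2.1
  norm_triangle := hN.2.2.2
  norm_eq_zero_iff := hN.2.1

lemma exists_dotp_le (hN : IsNorm N) (x : Fin d → ℝ) : ∃ C, ∀ w, dotp w x ≤ C * N w := by
  let := NormedAddCommGroup.ofCore hN.normedSpaceCore
  let := NormedSpace.ofCore hN.normedSpaceCore
  let f : NormedBy N →L[ℝ] ℝ :=
    LinearMap.toContinuousLinearMap ((dotProductBilin ℝ ℝ).flip x)
  exact ⟨‖f‖, fun w => (le_abs_self _).trans (f.le_opNorm w)⟩

lemma bddAbove_dotp (hN : IsNorm N) (x : Fin d → ℝ) :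
    BddAbove {s : ℝ | ∃ w, N w ≤ 1 ∧ s = dotp w x} := by
  obtain ⟨C, hC⟩ := hN.exists_dotp_le x
  refine ⟨max C 0, ?_⟩
  rintro _ ⟨w, hw, rfl⟩
  calc dotp w x ≤ C * N w := hC w
    _ ≤ max C 0 * N w := mul_le_mul_of_nonneg_right (le_max_left C 0) (hN.1 w)
    _ ≤ max C 0 := mul_le_of_le_one_right (le_max_right C 0) hw

lemma dotp_le_mul_dualNorm (hN : IsNorm N) (u x : Fin d → ℝ) :
    dotp u x ≤ N u * dualNorm N x := by
  rcases eq_or_ne u 0 with rfl | hu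
  · simp [dotp, (hN.2.1 0).2 rfl]
  have hNu : 0 < N u := (hN.1 u).lt_of_ne (Ne.symm (mt (hN.2.1 u).1 hu))
  have hunit : N ((N u)⁻¹ • u) ≤ 1 := by
    rw [hN.2.2.1, abs_of_pos (inv_pos.2 hNu), inv_mul_cancel₀ hNu.ne']
  have h := le_csSup (hN.bddAbove_dotp x) ⟨_, hunit, rfl⟩
  rwa [dotp_eq_dotProduct, smul_dotProduct, smul_eq_mul, inv_mul_le_iff₀ hNu] at h

lemma abs_dotp_le_mul_dualNorm (hN : IsNorm N) (u x : Fin d → ℝ) :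
    |dotp u x| ≤ N u * dualNorm N x := by
  have hneg : N (-u) = N u := by simpa using hN.2.2.1 (-1) u
  refine abs_le.2 ⟨?_, hN.dotp_le_mul_dualNorm u x⟩
  have := hN.dotp_le_mul_dualNorm (-u) x
  rw [hneg, dotp_eq_dotProduct, neg_dotProduct] at this
  exact neg_le.1 this

end IsNorm

/-- Lipschitz-type bound for `w ↦ √(εᵀ K^{(w)} ε)`:
`|√(εᵀK^{(w)}ε) − √(εᵀK^{(w̃)}ε)| ≤ Σ_i |ε_i| √|(w−w̃)ᵀx_i|`, and in terms of a norm `N`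
with dual norm `‖·‖_*`, this is at most `√(N(w−w̃)) Σ_i |ε_i| √(‖x_i‖_*)`. -/
theorem sqrt_quadform_kernel_lipschitz (d n : ℕ) (N : (Fin d → ℝ) → ℝ) (hN : IsNorm N)
    (x : Fin n → Fin d → ℝ) (ε : Fin n → ℝ) (w w' : Fin d → ℝ) :
    |Real.sqrt (∑ i, ∑ i', ε i * ε i' * brownianK (dotp w (x i)) (dotp w (x i'))) -
        Real.sqrt (∑ i, ∑ i', ε i * ε i' * brownianK (dotp w' (x i)) (dotp w' (x i')))| ≤
      ∑ i, |ε i| * Real.sqrt |dotp (w - w') (x i)| ∧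
    |Real.sqrt (∑ i, ∑ i', ε i * ε i' * brownianK (dotp w (x i)) (dotp w (x i'))) -
        Real.sqrt (∑ i, ∑ i', ε i * ε i' * brownianK (dotp w' (x i)) (dotp w' (x i')))| ≤
      Real.sqrt (N (w - w')) * ∑ i, |ε i| * Real.sqrt (dualNorm N (x i)) := by
  have hproj :=
    abs_sqrt_sum_sum_brownianK_sub_le ε (fun i => dotp w (x i)) (fun i => dotp w' (x i))
  simp only [← dotp_sub] at hproj
  refine ⟨hproj, hproj.trans ?_⟩
  rw [Finset.mul_sum]
  refine Finset.sum_le_sum fun i _ => ?_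
  rw [mul_left_comm, ← Real.sqrt_mul (hN.1 _)]
  gcongr
  exact hN.abs_dotp_le_mul_dualNorm _ _

end
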